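/- arXiv:cs/0701018 — 3 statements merged into one kernel-verified Lean document; each statement's English description precedes it below -/
import Mathlib

section
/- Let 0 < p_min < p_max ≤ 1, γ > 0 and λ > 1/p_min. If a real R ∈ (0, 1) satisfies R < ((p_min − 1/λ)/(√(γ + 1/λ) − p_max + p_min))², and √(γ + 1/λ) − p_max + p_min > 0, then (p_max − √(R(γ + 1/λ)) − 1/λ)/(p_max − p_min) > 1 − √R. -/
theorem stmt_8 (pmin pmax γ lam R : ℝ)
    (h0 : 0 < pmin) (h1 : pmin < pmax) (h2 : pmax ≤ 1)
    (hγ : 0 < γ) (hlam : 1 / pmin < lam)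
    (hden : Real.sqrt (γ + 1 / lam) - pmax + pmin > 0)
    (hR0 : 0 < R) (hR1 : R < 1)
    (hR : R < ((pmin - 1 / lam) / (Real.sqrt (γ + 1 / lam) - pmax + pmin)) ^ 2) :
    (pmax - Real.sqrt (R * (γ + 1 / lam)) - 1 / lam) / (pmax - pmin) >
      1 - Real.sqrt R := by
  have hlam0 : 0 < lam := lt_trans (by positivity) hlam
  have hinv : 1 / lam < pmin := by
    rw [div_lt_iff₀ hlam0]
    calc (1:ℝ) = pmin * (1 / pmin) := by field_simp
    _ < pmin * lam := by exact mul_lt_mul_of_pos_left hlam h0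
  set s := Real.sqrt (γ + 1 / lam) with hs
  have hspos : 0 < s := by positivity
  have hssq : s ^ 2 = γ + 1 / lam := Real.sq_sqrt (by positivity)
  have hsplit : Real.sqrt (R * (γ + 1 / lam)) = Real.sqrt R * s := by
    rw [hs, Real.sqrt_mul hR0.le]
  set t := Real.sqrt R with ht
  have ht0 : 0 < t := Real.sqrt_pos.mpr hR0
  have htsq : t ^ 2 = R := Real.sq_sqrt hR0.le
  have hq : 0 < (pmin - 1 / lam) / (s - pmax + pmin) := by
    apply div_pos (by linarith) hden
  have hlt : t < (pmin - 1 / lam) / (s - pmax + pmin) := by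
    have := Real.sqrt_lt_sqrt hR0.le hR
    rwa [← ht, Real.sqrt_sq hq.le] at this
  have hkey : t * (s - pmax + pmin) < pmin - 1 / lam := by
    rw [lt_div_iff₀ hden] at hlt
    linarith
  rw [gt_iff_lt, lt_div_iff₀ (by linarith), hsplit]
  nlinarith [hkey, ht0, h1]
end

section
/- Let p : Fin q → ℝ be a probability distribution with at least two distinct values among {p_j}, let γ = ∑_j p_j², λ > 0, R ≥ 0, and define g(s) = ∑_{j=1}^q p_j e^{−s (p_j − √(R(γ + 1/λ)) − 1/λ)} for s ∈ ℝ. Then g is convex, g(0) = 1, and g'(0) < 0 if and only if R < (γ − 1/λ)²/(γ + 1/λ) (assuming γ > 1/λ). Consequently, if R < (γ − 1/λ)²/(γ + 1/λ), then there exists s > 0 with g(s) < 1, i.e., the error exponent E_𝒜 = −ln(inf_{s>0} g(s)) is strictly positive. -/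
/-! With `c = √(R(γ + 1/λ)) + 1/λ`, `g s = ∑ p_j e^{(c - p_j) s}` is a nonnegative combination of
exponentials of linear functions, hence convex, with `g 0 = ∑ p_j = 1` and
`g' 0 = ∑ p_j (c - p_j) = c - γ`. As `γ - 1/λ > 0`, squaring turns `c < γ` into
`R < (γ - 1/λ)² / (γ + 1/λ)`, and a negative derivative at `0` gives `g s < g 0` for some
small `s > 0`. -/

open Real Set Finset

theorem HasDerivAt.exists_gt_lt_of_neg {f : ℝ → ℝ} {f' x : ℝ} (hf : HasDerivAt f f' x)
    (hf' : f' < 0) : ∃ y > x, f y < f x := by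
  obtain ⟨t, hslope, ht⟩ :=
    ((hf.tendsto_slope_zero_right.eventually (gt_mem_nhds hf')).and self_mem_nhdsWithin).exists
  have ht : 0 < t := ht
  rw [smul_eq_mul] at hslope
  exact ⟨x + t, by linarith, sub_neg.1 (neg_of_mul_neg_right hslope (inv_pos.2 ht).le)⟩

section ExpSum

variable {ι : Type*} (s : Finset ι) (w a : ι → ℝ)

theorem convexOn_sum_mul_exp (hw : ∀ i ∈ s, 0 ≤ w i) :
    ConvexOn ℝ univ (fun t => ∑ i ∈ s, w i * exp (a i * t)) := by
  have hexp (i : ι) : ConvexOn ℝ univ (fun t => exp (a i * t)) :=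
    convexOn_exp.comp_linearMap (LinearMap.mulLeft ℝ (a i))
  have hsum := sum_induction (fun i t => w i * exp (a i * t)) (ConvexOn ℝ univ)
    (fun _ _ => ConvexOn.add) (convexOn_const 0 convex_univ)
    (fun i hi => by simpa [smul_eq_mul] using (hexp i).smul (hw i hi))
  exact hsum.congr fun t _ => by simp

theorem hasDerivAt_sum_mul_exp (t : ℝ) :
    HasDerivAt (fun t => ∑ i ∈ s, w i * exp (a i * t)) (∑ i ∈ s, w i * a i * exp (a i * t)) t := by
  refine HasDerivAt.fun_sum fun i _ => ?_
  simpa [mul_assoc, mul_comm (a i)] using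
    (((hasDerivAt_id t).const_mul (a i)).exp.const_mul (w i))

end ExpSum

theorem sqrt_mul_lt_iff_lt_sq_div {R d e : ℝ} (hd : 0 < d) (he : 0 < e) :
    √(R * e) < d ↔ R < d ^ 2 / e := by
  rw [sqrt_lt' hd, lt_div_iff₀ he]

theorem stmt_12_general (q : ℕ) (p : Fin q → ℝ) (hp : ∀ j, 0 ≤ p j)
    (hsum : ∑ j, p j = 1)
    (γ lam R : ℝ) (hγ : γ = ∑ j, (p j) ^ 2) (hlam : 0 < lam)
    (hγlam : 1 / lam < γ)
    (g : ℝ → ℝ)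
    (hg : g = fun s => ∑ j, p j *
      Real.exp (-s * (p j - Real.sqrt (R * (γ + 1 / lam)) - 1 / lam))) :
    ConvexOn ℝ Set.univ g ∧ g 0 = 1 ∧
      (deriv g 0 < 0 ↔ R < (γ - 1 / lam) ^ 2 / (γ + 1 / lam)) ∧
      (R < (γ - 1 / lam) ^ 2 / (γ + 1 / lam) → ∃ s > 0, g s < 1) := by
  have hlam' : 0 < 1 / lam := by positivity
  set c := √(R * (γ + 1 / lam)) + 1 / lam with hc
  have hg' : g = fun s => ∑ j, p j * exp ((c - p j) * s) := by
    subst hg; funext s; congr! 3; ring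
  have hg0 : g 0 = 1 := by simp [hg', hsum]
  have hderiv : HasDerivAt g (c - γ) 0 := by
    convert hg' ▸ hasDerivAt_sum_mul_exp univ p (c - p ·) 0 using 1
    simp [mul_sub, sum_sub_distrib, ← sum_mul, hsum, hγ, sq, mul_comm]
  have hiff : c - γ < 0 ↔ R < (γ - 1 / lam) ^ 2 / (γ + 1 / lam) := by
    rw [sub_neg, hc, ← lt_sub_iff_add_lt, sqrt_mul_lt_iff_lt_sq_div] <;> linarith
  refine ⟨hg' ▸ convexOn_sum_mul_exp univ p _ fun j _ => hp j, hg0, hderiv.deriv ▸ hiff,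
    fun hR => ?_⟩
  obtain ⟨s, hs, hlt⟩ := hderiv.exists_gt_lt_of_neg (hiff.2 hR)
  exact ⟨s, hs, hg0 ▸ hlt⟩

theorem stmt_12 (q : ℕ) (p : Fin q → ℝ) (hp : ∀ j, 0 ≤ p j)
    (hsum : ∑ j, p j = 1) (hdist : ∃ i j, p i ≠ p j)
    (γ lam R : ℝ) (hγ : γ = ∑ j, (p j) ^ 2) (hlam : 0 < lam)
    (hγlam : 1 / lam < γ) (hR : 0 ≤ R)
    (g : ℝ → ℝ)
    (hg : g = fun s => ∑ j, p j *
      Real.exp (-s * (p j - Real.sqrt (R * (γ + 1 / lam)) - 1 / lam))) :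
    ConvexOn ℝ Set.univ g ∧ g 0 = 1 ∧
      (deriv g 0 < 0 ↔ R < (γ - 1 / lam) ^ 2 / (γ + 1 / lam)) ∧
      (R < (γ - 1 / lam) ^ 2 / (γ + 1 / lam) → ∃ s > 0, g s < 1) :=
  stmt_12_general q p hp hsum γ lam R hγ hlam hγlam g hg
end

section
/- Let p : Fin q → ℝ be a probability distribution, let λ > 0, s > 0, and let V_1,…,V_n and W_1,…,W_n be independent random variables where Pr{V_i = p_j} = 1/q and Pr{W_i = p_j} = p_j for each j. Then Pr{∑_{i=1}^n (V_i − W_i) ≥ −n/λ} ≤ e^{s n / λ} ((1/q) ∑_{j} e^{s p_j})^n (∑_j p_j e^{−s p_j})^n. -/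
theorem stmt_13 (q n : ℕ) (hq : 0 < q) (p : Fin q → ℝ) (hp : ∀ j, 0 ≤ p j)
    (hsum : ∑ j, p j = 1) (lam s : ℝ) (hlam : 0 < lam) (hs : 0 < s) :
    ∑ ω ∈ Finset.univ.filter
        (fun ω : (Fin n → Fin q) × (Fin n → Fin q) =>
          ∑ i, (p (ω.1 i) - p (ω.2 i)) ≥ -((n : ℝ) / lam)),
      ((∏ _i : Fin n, (1 / (q : ℝ))) * ∏ i, p (ω.2 i)) ≤
    Real.exp (s * n / lam) * ((1 / (q : ℝ)) * ∑ j, Real.exp (s * p j)) ^ n *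
      (∑ j, p j * Real.exp (-s * p j)) ^ n := by
  set W : (Fin n → Fin q) × (Fin n → Fin q) → ℝ := fun ω =>
    (∏ _i : Fin n, (1 / (q : ℝ))) * ∏ i, p (ω.2 i) with hW
  have hWnn : ∀ ω, 0 ≤ W ω := by
    intro ω
    apply mul_nonneg
    · exact Finset.prod_nonneg fun _ _ => by positivity
    · exact Finset.prod_nonneg fun i _ => hp _
  have key : ∀ ω ∈ Finset.univ.filter
      (fun ω : (Fin n → Fin q) × (Fin n → Fin q) =>
        ∑ i, (p (ω.1 i) - p (ω.2 i)) ≥ -((n : ℝ) / lam)),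
      W ω ≤ Real.exp (s * n / lam) *
        (W ω * Real.exp (s * ∑ i, (p (ω.1 i) - p (ω.2 i)))) := by
    intro ω hω
    simp only [Finset.mem_filter] at hω
    have h1 : Real.exp (-(s * n / lam)) ≤ Real.exp (s * ∑ i, (p (ω.1 i) - p (ω.2 i))) := by
      apply Real.exp_le_exp.mpr
      have h2 : s * (-((n : ℝ) / lam)) ≤ s * ∑ i, (p (ω.1 i) - p (ω.2 i)) :=
        mul_le_mul_of_nonneg_left hω.2 hs.le
      have h3 : -(s * n / lam) = s * (-((n : ℝ) / lam)) := by ring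
      linarith
    calc W ω = Real.exp (s * n / lam) * (W ω * Real.exp (-(s * n / lam))) := by
          rw [← mul_assoc, mul_comm (Real.exp _) (W ω), mul_assoc, ← Real.exp_add]
          simp
      _ ≤ _ := by
          apply mul_le_mul_of_nonneg_left _ (Real.exp_pos _).le
          exact mul_le_mul_of_nonneg_left h1 (hWnn ω)
  have step1 : ∑ ω ∈ Finset.univ.filter
        (fun ω : (Fin n → Fin q) × (Fin n → Fin q) =>
          ∑ i, (p (ω.1 i) - p (ω.2 i)) ≥ -((n : ℝ) / lam)), W ω ≤
      ∑ ω : (Fin n → Fin q) × (Fin n → Fin q),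
        Real.exp (s * n / lam) * (W ω * Real.exp (s * ∑ i, (p (ω.1 i) - p (ω.2 i)))) := by
    refine le_trans (Finset.sum_le_sum key) ?_
    apply Finset.sum_le_sum_of_subset_of_nonneg (Finset.filter_subset _ _)
    intro ω _ _
    have := hWnn ω
    positivity
  refine le_trans step1 ?_
  rw [← Finset.mul_sum, mul_assoc]
  apply mul_le_mul_of_nonneg_left _ (Real.exp_pos _).le
  refine le_of_eq ?_
  have factor : ∀ ω : (Fin n → Fin q) × (Fin n → Fin q),
      W ω * Real.exp (s * ∑ i, (p (ω.1 i) - p (ω.2 i))) =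
      (∏ i, (1 / (q : ℝ)) * Real.exp (s * p (ω.1 i))) *
      (∏ i, p (ω.2 i) * Real.exp (-s * p (ω.2 i))) := by
    intro ω
    rw [hW]
    have hsplit : s * ∑ i, (p (ω.1 i) - p (ω.2 i)) =
        ∑ i, (s * p (ω.1 i) + (-s) * p (ω.2 i)) := by
      rw [Finset.mul_sum]; exact Finset.sum_congr rfl fun i _ => by ring
    rw [hsplit, Real.exp_sum]
    simp only [Real.exp_add, Finset.prod_mul_distrib]
    ring
  calc ∑ ω : (Fin n → Fin q) × (Fin n → Fin q),
        W ω * Real.exp (s * ∑ i, (p (ω.1 i) - p (ω.2 i)))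
      = (∑ f : Fin n → Fin q, ∏ i, (1 / (q : ℝ)) * Real.exp (s * p (f i))) *
        (∑ g : Fin n → Fin q, ∏ i, p (g i) * Real.exp (-s * p (g i))) := by
        rw [Finset.sum_mul_sum, ← Fintype.sum_prod_type']
        exact Finset.sum_congr rfl fun ω _ => factor ω
    _ = ((1 / (q : ℝ)) * ∑ j, Real.exp (s * p j)) ^ n *
        (∑ j, p j * Real.exp (-s * p j)) ^ n := by
        have e1 : ∑ f : Fin n → Fin q, ∏ i, (1 / (q : ℝ)) * Real.exp (s * p (f i)) =
            (∑ j, (1 / (q : ℝ)) * Real.exp (s * p j)) ^ n := by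
          rw [show (∑ j, (1 / (q : ℝ)) * Real.exp (s * p j)) ^ n =
              ∏ _i : Fin n, ∑ j, (1 / (q : ℝ)) * Real.exp (s * p j) by simp,
            Finset.prod_univ_sum]
          simp
        have e2 : ∑ g : Fin n → Fin q, ∏ i, p (g i) * Real.exp (-s * p (g i)) =
            (∑ j, p j * Real.exp (-s * p j)) ^ n := by
          rw [show (∑ j, p j * Real.exp (-s * p j)) ^ n =
              ∏ _i : Fin n, ∑ j, p j * Real.exp (-s * p j) by simp,
            Finset.prod_univ_sum]
          simp
        rw [e1, e2, Finset.mul_sum]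
end
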